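/- Let k₁, …, kₙ be natural numbers such that Next(kᵢ, k_{i+1}) holds for each i = 1, …, n−1. If a natural number d satisfies kᵢ ≤ d < k_{i+1} for some i ∈ {1, …, n−1}, then kᵢ is the best approximate of kₙ up to d (kₙ|_d = kᵢ). Further, if k₁ = 0, then every best approximate of kₙ (i.e., every Y such that kₙ|_d = Y for some d) is equal to kᵢ for some i ∈ {1, …, n}. -/

import Mathlib

/-!
Along a `Next`-chain the values `sin kᵢ` increase, and a `Z < kᵢ` with `sin Z > sin kᵢ` keeps
beating every later `sin kⱼ`, since the next link forces `sin Z > sin kⱼ₊₁`. Hence for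
`kᵢ ≤ d < kᵢ₊₁` no `Z ≤ d` lies strictly between `sin kᵢ` and `sin kₙ`, and `sin` being injective
on the integers (`π` is irrational) makes `kᵢ` the unique best approximate. As best approximates
are unique, and a chain starting at `0` cuts `ℕ` into the intervals `[kᵢ, kᵢ₊₁)` and `[kₙ, ∞)`,
every best approximate of `kₙ` is one of the `kᵢ`.
-/

/-- `BestApp X d Y` says that `Y` is the best approximate of `X` up to `d`
(written `X|_d = Y`): `Y ≤ d`, `sin Y ≤ sin X`, and for every `Z ≤ d` with
`Z ≠ Y` and `sin Z ≤ sin X` one has `sin Z < sin Y`. -/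
def BestApp (X d Y : ℕ) : Prop :=
  Y ≤ d ∧ Real.sin Y ≤ Real.sin X ∧
    ∀ Z : ℕ, Z ≤ d → Z ≠ Y → Real.sin Z ≤ Real.sin X → Real.sin Z < Real.sin Y


/-- `Next X₁ X₂` holds iff `X₁ < X₂`, `sin X₁ < sin X₂`, and for every `Z < X₂`
either `sin Z ≤ sin X₁` or `sin X₂ < sin Z`. -/
def Next (X₁ X₂ : ℕ) : Prop :=
  X₁ < X₂ ∧ Real.sin X₁ < Real.sin X₂ ∧
    ∀ Z : ℕ, Z < X₂ → Real.sin Z ≤ Real.sin X₁ ∨ Real.sin X₂ < Real.sin Z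

open Relation Order Set

theorem Real.sin_intCast_injective : Function.Injective fun n : ℤ => Real.sin n := by
  intro a b hab
  obtain ⟨m, hm | hm⟩ := Real.sin_eq_sin_iff.1 hab
  · by_contra hne
    have hm0 : m ≠ 0 := by
      rintro rfl
      exact hne (by exact_mod_cast (by simpa using hm : (b : ℝ) = a).symm)
    have key : ((2 * m : ℤ) : ℝ) * Real.pi = ((b - a : ℤ) : ℝ) := by push_cast; linarith
    exact (irrational_pi.intCast_mul (by omega)).ne_int _ key
  · have key : ((2 * m + 1 : ℤ) : ℝ) * Real.pi = ((a + b : ℤ) : ℝ) := by push_cast; linarith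
    exact absurd key ((irrational_pi.intCast_mul (by omega)).ne_int _)

theorem Real.sin_natCast_injective : Function.Injective fun n : ℕ => Real.sin n := by
  simpa [Function.comp_def] using Real.sin_intCast_injective.comp Nat.cast_injective

theorem exists_mem_Ico_and_not_succ {α : Type*} [PartialOrder α] [SuccOrder α]
    [IsSuccArchimedean α] {p : α → Prop} {a b : α} (hab : a ≤ b) (ha : p a) (hb : ¬p b) :
    ∃ i ∈ Ico a b, p i ∧ ¬p (succ i) := by
  by_contra! H
  have hchain : ReflTransGen (· → ·) (p a) (p b) :=
    (reflTransGen_of_succ_of_le (fun i j => p i → p j) H hab).lift p fun _ _ h => h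
  exact hb ((reflTransGen_eq_self (r := (· → ·))).le _ _ hchain ha)

theorem sin_le_sin_of_reflTransGen_next {a b : ℕ} (h : ReflTransGen Next a b) :
    Real.sin a ≤ Real.sin b := by
  induction h with
  | refl => exact le_rfl
  | tail _ hnext ih => exact ih.trans hnext.2.1.le

theorem sin_lt_of_reflTransGen_next {b X Z : ℕ} (h : ReflTransGen Next b X) (hZ : Z < b)
    (hsin : Real.sin b < Real.sin Z) : Real.sin X < Real.sin Z := by
  induction h using ReflTransGen.head_induction_on generalizing Z with
  | refl => exact hsin
  | head hnext _ ih =>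
    obtain ⟨hlt, -, hgap⟩ := hnext
    exact ih (hZ.trans hlt) ((hgap Z (hZ.trans hlt)).resolve_left hsin.not_ge)

theorem BestApp.eq {X d Y₁ Y₂ : ℕ} (h₁ : BestApp X d Y₁) (h₂ : BestApp X d Y₂) : Y₁ = Y₂ := by
  by_contra hne
  exact (h₁.2.2 Y₂ h₂.1 (Ne.symm hne) h₂.2.1).not_gt (h₂.2.2 Y₁ h₁.1 hne h₁.2.1)

theorem bestApp_self {X d : ℕ} (h : X ≤ d) : BestApp X d X :=
  ⟨h, le_rfl, fun _ _ hZX hle => hle.lt_of_ne (Real.sin_natCast_injective.ne hZX)⟩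

theorem Next.bestApp {a b X d : ℕ} (hab : Next a b) (hbX : ReflTransGen Next b X) (had : a ≤ d)
    (hdb : d < b) : BestApp X d a := by
  refine ⟨had, hab.2.1.le.trans (sin_le_sin_of_reflTransGen_next hbX), fun Z hZd hZa hZX => ?_⟩
  rcases hab.2.2 Z (hZd.trans_lt hdb) with hle | hlt
  · exact hle.lt_of_ne (Real.sin_natCast_injective.ne hZa)
  · exact absurd hZX (sin_lt_of_reflTransGen_next hbX (hZd.trans_lt hdb) hlt).not_ge

theorem Fin.orderSucc_eq_mk {n : ℕ} {i : Fin n} (h : i.1 + 1 < n) :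
    Order.succ i = ⟨i.1 + 1, h⟩ :=
  (Fin.covBy_iff.2 (Nat.covBy_iff_add_one_eq.2 (by simp))).succ_eq

/-- **Lemma 3.11.** Let `k 0, …, k (n-1)` be naturals with
`Next (k i) (k (i+1))` for each `i < n - 1`.  If `k i ≤ d < k (i+1)`, then
`k i` is the best approximate of `k (n-1)` up to `d`.  Further, if `k 0 = 0`,
then every best approximate of `k (n-1)` equals `k i` for some `i < n`. -/
theorem bestApp_of_next_chain (n : ℕ) (hn : 0 < n) (k : Fin n → ℕ)
    (hnext : ∀ i : Fin n, ∀ h : i.1 + 1 < n, Next (k i) (k ⟨i.1 + 1, h⟩)) :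
    (∀ d : ℕ, ∀ i : Fin n, ∀ h : i.1 + 1 < n,
        k i ≤ d → d < k ⟨i.1 + 1, h⟩ →
          BestApp (k ⟨n - 1, by omega⟩) d (k i)) ∧
      (k ⟨0, hn⟩ = 0 →
        ∀ d Y : ℕ, BestApp (k ⟨n - 1, by omega⟩) d Y → ∃ i : Fin n, Y = k i) := by
  set last : Fin n := ⟨n - 1, by omega⟩
  have next_succ (i : Fin n) (hi : i < last) : Next (k i) (k (succ i)) := by
    have h : i.1 + 1 < n := by have : i.1 < n - 1 := hi; omega
    rw [Fin.orderSucc_eq_mk h]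
    exact hnext i h
  have to_last (i : Fin n) : ReflTransGen Next (k i) (k last) :=
    (reflTransGen_of_succ_of_le (fun a b => Next (k a) (k b)) (fun j hj => next_succ j hj.2)
      (Fin.le_def.2 (Nat.le_sub_one_of_lt i.2))).lift k fun _ _ h => h
  refine ⟨fun d i h hid hdi => (hnext i h).bestApp (to_last _) hid hdi, fun h0 d Y hY => ?_⟩
  by_cases hd : k last ≤ d
  · exact ⟨last, hY.eq (bestApp_self hd)⟩
  obtain ⟨i, hi, hid, hdi⟩ := exists_mem_Ico_and_not_succ (p := fun j => k j ≤ d)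
    (Fin.le_def.2 (Nat.zero_le _) : (⟨0, hn⟩ : Fin n) ≤ last) (h0.trans_le d.zero_le) hd
  exact ⟨i, hY.eq ((next_succ i hi.2).bestApp (to_last _) hid (not_le.1 hdi))⟩
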